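/- If y ∈ U_w = R_w B and b_+ = nt ∈ B_+ = N_0 T_+, and if x = t^{-1} n^{-1} y lies in U_{w'} = R_{w'} B, then w' ⪯ w in the strong Bruhat order on S_n. -/

import Mathlib

open Matrix

variable (p : ℕ) [Fact p.Prime] (F : Type) [Field F] [Algebra ℚ_[p] F]
  [FiniteDimensional ℚ_[p] F] [Algebra ℤ_[p] F] [IsScalarTower ℤ_[p] ℚ_[p] F]

/-- The ring of integers `o_F` of the finite extension `F` of `ℚ_p`. -/
def oF : Set F := {x | x ∈ integralClosure ℤ_[p] F}

/-- The ideal `π_F o_F` of `o_F`, as a subset of `F`. -/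
def piO (π : F) : Set F := {x | ∃ c ∈ oF p F, x = π * c}

/-- The permutation matrix of `w`, with `w_{ij} = 1` iff `w(j) = i`. -/
def permMat (n : ℕ) (w : Equiv.Perm (Fin n)) : Matrix (Fin n) (Fin n) F :=
  fun i j => if w j = i then 1 else 0

/-- `R_w`: the set of matrices `(a_{ij})` with `a_{ij} = 1` if `w⁻¹(i) = j`,
`a_{ij} = 0` if `w⁻¹(i) < j`, `a_{ij} ∈ o_F` if `w⁻¹(i) > j` and `w(j) > i`, and
`a_{ij} ∈ π_F o_F` if `w⁻¹(i) > j` and `w(j) < i`. -/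
def Rw (π : F) (n : ℕ) (w : Equiv.Perm (Fin n)) : Set (Matrix (Fin n) (Fin n) F) :=
  {a | ∀ i j : Fin n,
    (w⁻¹ i = j → a i j = 1) ∧
    (w⁻¹ i < j → a i j = 0) ∧
    (j < w⁻¹ i → i < w j → a i j ∈ oF p F) ∧
    (j < w⁻¹ i → w j < i → a i j ∈ piO p F π)}

/-- invertible upper triangular matrix (an element of the Borel `B`). -/
def IsBorel {n : ℕ} (b : Matrix (Fin n) (Fin n) F) : Prop :=
  (∀ i j : Fin n, j < i → b i j = 0) ∧ (∀ i : Fin n, b i i ≠ 0)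

/-- membership in `N₀`: upper triangular unipotent with entries in `o_F`. -/
def IsN0 {n : ℕ} (m : GL (Fin n) F) : Prop :=
  (∀ i : Fin n, (↑m : Matrix (Fin n) (Fin n) F) i i = 1) ∧
  (∀ i j : Fin n, j < i → (↑m : Matrix (Fin n) (Fin n) F) i j = 0) ∧
  (∀ i j : Fin n, (↑m : Matrix (Fin n) (Fin n) F) i j ∈ oF p F)

/-- `T₊ = {t ∈ T : t N₀ t⁻¹ ⊆ N₀}`. -/
def Tplus (n : ℕ) : Set (GL (Fin n) F) :=
  {t | (∀ i j : Fin n, i ≠ j → (↑t : Matrix (Fin n) (Fin n) F) i j = 0) ∧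
    ∀ m : GL (Fin n) F, IsN0 p F m → IsN0 p F (t * m * t⁻¹)}

/-- `U_w = R_w B`. -/
def RwB (π : F) (n : ℕ) (w : Equiv.Perm (Fin n)) : Set (Matrix (Fin n) (Fin n) F) :=
  {x | ∃ r b : Matrix (Fin n) (Fin n) F, r ∈ Rw p F π n w ∧ IsBorel F b ∧ x = r * b}

/-- The length of a permutation: its number of inversions. -/
def len {n : ℕ} (w : Equiv.Perm (Fin n)) : ℕ :=
  Finset.card (Finset.univ.filter (fun q : Fin n × Fin n => q.1 < q.2 ∧ w q.2 < w q.1))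

/-- The strong Bruhat order on `Sₙ`: `w' ⪯ w` iff there are transpositions
`t₁,…,t_k` with `w' = w t₁ ⋯ t_k` and strictly decreasing lengths
`ℓ(w) > ℓ(w t₁) > ⋯ > ℓ(w t₁ ⋯ t_k)`. -/
def BruhatLE {n : ℕ} (w' w : Equiv.Perm (Fin n)) : Prop :=
  ∃ L : List (Equiv.Perm (Fin n)),
    (∀ t ∈ L, ∃ a b : Fin n, a ≠ b ∧ t = Equiv.swap a b) ∧
    w' = w * L.prod ∧
    ∀ k < L.length, len (w * (L.take (k + 1)).prod) < len (w * (L.take k).prod)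

/-!
Let `v` be the valuation of `o_F`, which is a valuation ring because every nonzero element is a
unit times a power of `π`. Call the pivot of a nonzero vector the last coordinate at which it has
maximal valuation. For `r ∈ R_w`, the pivot of `r a` is `w l` for some `l` in the support of `a`;
multiplying by `n ∈ N₀` does not move pivots, and multiplying by `t ∈ T₊`, whose diagonal entries
have valuations increasing down the diagonal, can only move them down. Writing `y = r b` and
`x = r' b'`, we get `n t r' = r (b b'⁻¹)` with `b b'⁻¹` upper triangular. So `n t` sends every
nonzero combination of the columns `s ≤ l` of `r'` with `w' s ≥ i` to a vector whose pivot lies in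
`{w s | s ≤ l, w s ≥ i}`, and linear algebra gives
`#{s ≤ l | w' s ≥ i} ≤ #{s ≤ l | w s ≥ i}` for all `i, l`. This tableau criterion yields the
chain of transpositions: if `j` is the first position where `w'` and `w` differ, swap `j` with the
first position `m > j` such that `w' j ≤ w m < w j`.
-/

open Finset

lemma exists_max_image_lex {ι α β : Type*} [Fintype ι] [Nonempty ι] [LinearOrder α]
    [LinearOrder β] (f : ι → α) (g : ι → β) :
    ∃ k, ∀ i, f i ≤ f k ∧ (g k < g i → f i < f k) := by
  obtain ⟨k, -, hk⟩ := univ.exists_max_image (fun i => toLex (f i, g i)) univ_nonempty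
  refine ⟨k, fun i => ?_⟩
  rcases Prod.Lex.le_iff.1 (hk i (mem_univ i)) with h | ⟨h, h'⟩
  · exact ⟨h.le, fun _ => h⟩
  · exact ⟨h.le, fun hlt => absurd h' (not_le.2 hlt)⟩

lemma mul_lt_of_lt_one_of_le_of_ne_zero {Γ₀ : Type*} [LinearOrderedCommGroupWithZero Γ₀]
    {a b c : Γ₀} (ha : a < 1) (hb : b ≤ c) (hc : c ≠ 0) : a * b < c :=
  (mul_le_mul_right hb a).trans_lt (mul_lt_of_lt_one_left (zero_lt_iff.2 hc) ha)

namespace Valuation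

variable {K Γ₀ : Type*} [DivisionRing K] [LinearOrderedCommGroupWithZero Γ₀] (v : Valuation K Γ₀)
variable {ι : Type*} [LinearOrder ι]

def IsPivot (d : ι → K) (k : ι) : Prop :=
  d k ≠ 0 ∧ (∀ i, v (d i) ≤ v (d k)) ∧ ∀ i, k < i → v (d i) < v (d k)

variable {v}

theorem IsPivot.unique {d : ι → K} {k k' : ι} (h : v.IsPivot d k) (h' : v.IsPivot d k') :
    k = k' := by
  by_contra hne
  rcases lt_or_gt_of_ne hne with hlt | hlt
  · exact (h.2.2 k' hlt).not_ge (h'.2.1 k)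
  · exact (h'.2.2 k hlt).not_ge (h.2.1 k')

theorem exists_isPivot [Fintype ι] {d : ι → K} (hd : d ≠ 0) : ∃ k, v.IsPivot d k := by
  obtain ⟨i₀, hi₀⟩ := Function.ne_iff.1 hd
  have : Nonempty ι := ⟨i₀⟩
  obtain ⟨k, hk⟩ := exists_max_image_lex (fun i => v (d i)) id
  refine ⟨k, ?_, fun i => (hk i).1, fun i => (hk i).2⟩
  intro h0
  have := (hk i₀).1
  simp only [h0, map_zero, le_zero_iff] at this
  exact hi₀ (v.zero_iff.1 this)

theorem IsPivot.le_of_isPivot_mul {z τ : ι → K} {k k' : ι} (hz : v.IsPivot z k)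
    (hτ : Monotone fun i => v (τ i)) (h : v.IsPivot (fun i => τ i * z i) k') : k ≤ k' := by
  by_contra! hlt
  have := h.2.2 k hlt
  simp only [map_mul] at this
  exact this.not_ge (mul_le_mul' (hτ hlt.le) (hz.2.1 k'))

theorem isPivot_sum {κ : Type*} [Fintype κ] [DecidableEq κ] {f : ι → κ → K} {k : ι} {j₀ : κ}
    (h0 : f k j₀ ≠ 0) (hle : ∀ i j, v (f i j) ≤ v (f k j₀))
    (hlt : ∀ i j, k ≤ i → (i, j) ≠ (k, j₀) → v (f i j) < v (f k j₀)) :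
    v.IsPivot (fun i => ∑ j, f i j) k := by
  have hpos : v (f k j₀) ≠ 0 := v.ne_zero_iff.2 h0
  have hrow : v (∑ j, f k j) = v (f k j₀) := by
    rw [← add_sum_erase _ _ (mem_univ j₀)]
    refine v.map_add_eq_of_lt_left (v.map_sum_lt hpos fun j hj => hlt k j le_rfl ?_)
    simpa using ne_of_mem_erase hj
  refine ⟨fun h => hpos (hrow ▸ (v.zero_iff.2 h)), fun i => ?_, fun i hi => ?_⟩
  · exact hrow ▸ v.map_sum_le fun j _ => hle i j
  · exact hrow ▸ v.map_sum_lt hpos fun j _ => hlt i j hi.le (by simp [hi.ne'])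

theorem IsPivot.mulVec_of_unitriangular [Fintype ι] {N : Matrix ι ι K} {e : ι → K} {k : ι}
    (hN : N.IsUpperTriangular) (hN1 : ∀ i, N i i = 1) (hNv : ∀ i j, v (N i j) ≤ 1)
    (he : v.IsPivot e k) : v.IsPivot (N *ᵥ e) k := by
  refine v.isPivot_sum (f := fun i j => N i j * e j) (j₀ := k) (by simpa [hN1] using he.1)
    (fun i j => ?_) (fun i j hki hne => ?_)
  · simpa [hN1] using mul_le_of_le_one_of_le (hNv i j) (he.2.1 j)
  · simp only [hN1, one_mul, map_mul]
    rcases lt_trichotomy j i with hji | rfl | hij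
    · simpa [hN hji] using zero_lt_iff.2 (v.ne_zero_iff.2 he.1)
    · simpa [hN1] using he.2.2 j (hki.lt_of_ne' (by simpa using hne))
    · exact mul_lt_of_le_one_of_lt (hNv i j) (he.2.2 j (hki.trans_lt hij))

section Rw

variable {n : ℕ}

/-- `R_w`, with the conditions `∈ o_F` and `∈ π_F o_F` on the entries read as `v ≤ 1` and
`v < 1`. -/
def Rw (v : Valuation K Γ₀) (w : Equiv.Perm (Fin n)) : Set (Matrix (Fin n) (Fin n) K) :=
  {r | ∀ i j : Fin n,
    (w⁻¹ i = j → r i j = 1) ∧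
    (w⁻¹ i < j → r i j = 0) ∧
    (j < w⁻¹ i → i < w j → v (r i j) ≤ 1) ∧
    (j < w⁻¹ i → w j < i → v (r i j) < 1)}

variable {w : Equiv.Perm (Fin n)} {r : Matrix (Fin n) (Fin n) K}

theorem Rw.apply_self (hr : r ∈ v.Rw w) (l : Fin n) : r (w l) l = 1 :=
  (hr _ _).1 (by simp)

theorem Rw.valuation_le_one (hr : r ∈ v.Rw w) (i j : Fin n) : v (r i j) ≤ 1 := by
  rcases lt_trichotomy (w⁻¹ i) j with h | h | h
  · simp [(hr i j).2.1 h]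
  · simp [(hr i j).1 h]
  · rcases lt_trichotomy i (w j) with h' | rfl | h'
    · exact (hr i j).2.2.1 h h'
    · simp at h
    · exact ((hr i j).2.2.2 h h').le

/-- The witness `l` is, among the coordinates of `a` of largest valuation, the one with the
largest `w l`. -/
theorem Rw.exists_isPivot_mulVec (hr : r ∈ v.Rw w) {a : Fin n → K} (ha : a ≠ 0) :
    ∃ l, a l ≠ 0 ∧ v.IsPivot (r *ᵥ a) (w l) := by
  obtain ⟨l₁, hl₁⟩ := Function.ne_iff.1 ha
  have : Nonempty (Fin n) := ⟨l₁⟩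
  obtain ⟨ls, hls⟩ := exists_max_image_lex (fun l => v (a l)) w
  have hls0 : a ls ≠ 0 := by
    intro h
    have := (hls l₁).1
    rw [h, map_zero, le_zero_iff, v.zero_iff] at this
    exact hl₁ this
  have h1 : r (w ls) ls = 1 := Rw.apply_self hr ls
  have hM : v (a ls) ≠ 0 := v.ne_zero_iff.2 hls0
  refine ⟨ls, hls0, v.isPivot_sum (f := fun i l => r i l * a l) (j₀ := ls)
    (by simpa [h1] using hls0) (fun i l => ?_) (fun i l hi hne => ?_)⟩
  · simpa [h1] using mul_le_of_le_one_of_le (Rw.valuation_le_one hr i l) (hls l).1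
  · simp only [h1, one_mul, map_mul]
    rcases lt_trichotomy (w⁻¹ i) l with h | h | h
    · simpa [(hr i l).2.1 h] using zero_lt_iff.2 hM
    · obtain rfl : i = w l := by simp [← h]
      have hl : l ≠ ls := by rintro rfl; exact hne rfl
      simpa [(hr _ l).1 h] using (hls l).2 (hi.lt_of_ne (by simpa using hl.symm))
    · rcases lt_or_gt_of_ne (show i ≠ w l by rintro rfl; simp at h) with h' | h'
      · exact mul_lt_of_le_one_of_lt ((hr i l).2.2.1 h h') ((hls l).2 (hi.trans_lt h'))
      · exact mul_lt_of_lt_one_of_le_of_ne_zero ((hr i l).2.2.2 h h') (hls l).1 hM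

theorem Rw.exists_isPivot_unitriangular_mul_diagonal_mul {w' : Equiv.Perm (Fin n)}
    {r' N D : Matrix (Fin n) (Fin n) K} (hr' : r' ∈ v.Rw w') (hN : N.IsUpperTriangular)
    (hN1 : ∀ i, N i i = 1) (hNv : ∀ i j, v (N i j) ≤ 1) (hD : D.IsDiag) (hD0 : ∀ i, D i i ≠ 0)
    (hDv : Monotone fun i => v (D i i)) {x : Fin n → K} (hx : x ≠ 0) :
    ∃ s k, x s ≠ 0 ∧ w' s ≤ k ∧ v.IsPivot (N *ᵥ (D *ᵥ (r' *ᵥ x))) k := by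
  obtain ⟨s, hs, hpiv⟩ := Rw.exists_isPivot_mulVec hr' hx
  have hDmul : D *ᵥ (r' *ᵥ x) = fun i => D i i * (r' *ᵥ x) i := by
    funext i
    conv_lhs => rw [← hD.diagonal_diag]
    exact mulVec_diagonal _ _ i
  obtain ⟨k, hk⟩ := exists_isPivot (v := v) (d := D *ᵥ (r' *ᵥ x))
    (Function.ne_iff.2 ⟨w' s, by simpa [hDmul] using ⟨hD0 _, hpiv.1⟩⟩)
  exact ⟨s, k, hs, hpiv.le_of_isPivot_mul hDv (hDmul ▸ hk), hk.mulVec_of_unitriangular hN hN1 hNv⟩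

theorem Rw.exists_eq_of_isPivot_mul_upperTriangular {c : Matrix (Fin n) (Fin n) K}
    (hr : r ∈ v.Rw w) (hc : c.IsUpperTriangular)
    {x : Fin n → K} {l : ℕ} (hxl : ∀ s : Fin n, l < s → x s = 0) {k : Fin n}
    (hk : v.IsPivot (r *ᵥ (c *ᵥ x)) k) : ∃ s : Fin n, (s : ℕ) ≤ l ∧ k = w s := by
  obtain ⟨s, hs, hpiv⟩ := Rw.exists_isPivot_mulVec hr (v := v) (a := c *ᵥ x)
    fun h => hk.1 (by simp [h])
  refine ⟨s, not_lt.1 fun hls => hs ?_, hk.unique hpiv⟩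
  change ∑ j, c s j * x j = 0
  refine sum_eq_zero fun j _ => ?_
  rcases lt_or_ge j s with hjs | hsj
  · simp [hc hjs]
  · simp [hxl j (hls.trans_le hsj)]

end Rw

end Valuation

theorem card_le_card_of_forall_exists_ne_zero {K ι κ : Type*} [DivisionRing K] [Fintype ι]
    (f : (ι → K) →ₗ[K] κ → K) (S : Finset κ) (h : ∀ a ≠ 0, ∃ i ∈ S, f a i ≠ 0) :
    Fintype.card ι ≤ #S := by
  have hinj : Function.Injective (LinearMap.funLeft K K ((↑) : S → κ) ∘ₗ f) := by
    refine (injective_iff_map_eq_zero _).2 fun a ha => by_contra fun ha0 => ?_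
    obtain ⟨i, hi, hne⟩ := h a ha0
    exact hne (congr_fun ha ⟨i, hi⟩)
  simpa using LinearMap.finrank_le_finrank_of_injective hinj

namespace Equiv.Perm

variable {n : ℕ}

theorem apply_lt_apply_of_swap_apply_lt {w : Perm (Fin n)} {j m a b : Fin n} (hjm : j < m)
    (hw : w m < w j) (hab : a < b) (hrev : swap j m b < swap j m a)
    (hinv : w (swap j m b) < w (swap j m a)) : w b < w a ∧ (a, b) ≠ (j, m) := by
  have : (a = j ∧ b < m) ∨ (j < a ∧ b = m) ∨ (a = j ∧ b = m) := by
    simp only [swap_apply_def] at hrev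
    split_ifs at hrev <;> omega
  rcases this with ⟨rfl, hbm⟩ | ⟨hja, rfl⟩ | ⟨rfl, rfl⟩
  · rw [swap_apply_of_ne_of_ne hab.ne' hbm.ne, swap_apply_left] at hinv
    exact ⟨hinv.trans hw, by simp [hbm.ne]⟩
  · rw [swap_apply_of_ne_of_ne hja.ne' hab.ne, swap_apply_right] at hinv
    exact ⟨hw.trans hinv, by simp [hja.ne']⟩
  · rw [swap_apply_left, swap_apply_right] at hinv
    exact absurd hinv (not_lt.2 hw.le)

theorem len_mul_swap_lt {w : Perm (Fin n)} {j m : Fin n} (hjm : j < m) (hw : w m < w j) :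
    len (w * swap j m) < len w := by
  set τ := swap j m
  have hττ : ∀ s, τ (τ s) = s := swap_apply_self j m
  set I := univ.filter fun q : Fin n × Fin n => q.1 < q.2 ∧ w q.2 < w q.1
  set J := univ.filter fun q : Fin n × Fin n => q.1 < q.2 ∧ (w * τ) q.2 < (w * τ) q.1
  -- Moving a pair by `τ` when `τ` keeps it ordered, and fixing it otherwise, injects the
  -- inversions of `w * τ` into those of `w` other than `(j, m)`.
  let φ : Fin n × Fin n → Fin n × Fin n := fun q => if τ q.1 < τ q.2 then (τ q.1, τ q.2) else q
  have hmaps : ∀ q ∈ J, φ q ∈ I.erase (j, m) := by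
    rintro ⟨a, b⟩ hq
    obtain ⟨hab, hq⟩ := (mem_filter.1 hq).2
    simp only [Perm.mul_apply] at hq
    simp only [φ, I, mem_erase, mem_filter, mem_univ, true_and, ne_eq]
    split_ifs with h
    · refine ⟨fun h' => ?_, h, hq⟩
      simp only [Prod.mk.injEq] at h'
      rw [← hττ a, ← hττ b, h'.1, h'.2] at hab
      exact absurd hab (by simpa [τ] using hjm.le)
    · have hba : τ b < τ a := lt_of_le_of_ne (not_lt.1 h) (τ.injective.ne hab.ne')
      obtain ⟨hlt, hne⟩ := apply_lt_apply_of_swap_apply_lt hjm hw hab hba hq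
      exact ⟨hne, hab, hlt⟩
  have hinj : Set.InjOn φ J := by
    rintro ⟨a₁, b₁⟩ h₁ ⟨a₂, b₂⟩ h₂ he
    have h₁ := (mem_filter.1 h₁).2.1
    have h₂ := (mem_filter.1 h₂).2.1
    simp only [φ] at he
    split_ifs at he with hq₁ hq₂ hq₂
    · simpa using he
    · simp only [Prod.mk.injEq] at he
      rw [← he.1, ← he.2, hττ, hττ] at hq₂
      exact absurd h₁ hq₂
    · simp only [Prod.mk.injEq] at he
      rw [he.1, he.2, hττ, hττ] at hq₁
      exact absurd h₂ hq₁
    · exact he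
  calc _ ≤ #(I.erase (j, m)) := card_le_card_of_injOn φ hmaps hinj
    _ < #I := card_erase_lt_of_mem (by simp [I, hjm, hw])

/-- By the tableau criterion, `w' ⪯ w` iff `rankCount w' ≤ rankCount w` pointwise. -/
def rankCount (u : Perm (Fin n)) (i l : ℕ) : ℕ :=
  #(univ.filter fun s : Fin n => (s : ℕ) ≤ l ∧ i ≤ (u s : ℕ))

variable {w : Perm (Fin n)} {j m : Fin n} {i l : ℕ}

theorem rankCount_mul_swap_of_lt_or_le (hl : l < j ∨ (m : ℕ) ≤ l) (hjm : j < m) :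
    rankCount (w * swap j m) i l = rankCount w i l := by
  have hτ : ∀ s : Fin n, ((swap j m s : ℕ) ≤ l ↔ (s : ℕ) ≤ l) := by
    intro s
    simp only [swap_apply_def]
    split_ifs <;> omega
  refine card_nbij' (swap j m) (swap j m) (fun s hs => ?_) (fun s hs => ?_)
    (fun s _ => swap_apply_self j m s) (fun s _ => swap_apply_self j m s)
  · rw [coe_filter] at hs ⊢
    simpa [hτ] using hs
  · rw [coe_filter] at hs ⊢
    simpa [hτ] using hs

theorem rankCount_mul_swap_add (hjl : (j : ℕ) ≤ l) (hlm : l < m) :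
    rankCount (w * swap j m) i l + (if i ≤ (w j : ℕ) then 1 else 0) =
      rankCount w i l + (if i ≤ (w m : ℕ) then 1 else 0) := by
  set A := univ.filter fun s : Fin n => (s : ℕ) ≤ l ∧ i ≤ (w s : ℕ)
  set A' := univ.filter fun s : Fin n => (s : ℕ) ≤ l ∧ i ≤ ((w * swap j m) s : ℕ)
  have herase : A'.erase j = A.erase j := by
    ext s
    simp only [A, A', mem_erase, mem_filter]
    simp only [mem_univ, true_and, Perm.mul_apply]
    refine and_congr_right fun hsj => and_congr_right fun hsl => ?_
    rw [swap_apply_of_ne_of_ne hsj (by rintro rfl; omega)]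
  have hcard : ∀ B : Finset (Fin n), #B = #(B.erase j) + if j ∈ B then 1 else 0 := by
    intro B
    split_ifs with h
    · exact (card_erase_add_one h).symm
    · simp [erase_eq_of_notMem h]
  have hA : j ∈ A ↔ i ≤ (w j : ℕ) := by simp [A, hjl]
  have hA' : j ∈ A' ↔ i ≤ (w m : ℕ) := by
    rw [mem_filter]
    simp [hjl]
  change #A' + _ = #A + _
  rw [hcard A, hcard A', herase]
  simp only [hA, hA']
  omega

theorem rankCount_le_rankCount_mul_swap_add (hjm : j < m) :
    rankCount w i l ≤ rankCount (w * swap j m) i l +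
      if (j : ℕ) ≤ l ∧ l < m ∧ (w m : ℕ) < i ∧ i ≤ (w j : ℕ) then 1 else 0 := by
  by_cases hl : l < j ∨ (m : ℕ) ≤ l
  · rw [rankCount_mul_swap_of_lt_or_le hl hjm]
    omega
  · push Not at hl
    have := rankCount_mul_swap_add (w := w) (i := i) hl.1 hl.2
    split_ifs at this ⊢ <;> omega

theorem rankCount_add_card_filter {u : Perm (Fin n)} {a : ℕ} (hai : a ≤ i) :
    rankCount u i l + #(univ.filter fun s : Fin n => (s : ℕ) ≤ l ∧ a ≤ (u s : ℕ) ∧ (u s : ℕ) < i) =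
      rankCount u a l := by
  rw [rankCount, rankCount, ← card_union_of_disjoint]
  · congr 1
    ext s
    simp only [mem_union, mem_filter, mem_univ, true_and]
    omega
  · exact disjoint_filter.2 fun s _ h h' => by omega

theorem apply_lt_of_rankCount_le {w' : Perm (Fin n)} (hagree : ∀ s < j, w' s = w s)
    (hD : rankCount w' (w' j) j ≤ rankCount w (w' j) j)
    (hne : w' j ≠ w j) : w' j < w j := by
  by_contra! hle
  have hlt : w j < w' j := lt_of_le_of_ne hle hne.symm
  set B := univ.filter fun s : Fin n => (s : ℕ) ≤ j ∧ (w' j : ℕ) ≤ (w s : ℕ)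
  set B' := univ.filter fun s : Fin n => (s : ℕ) ≤ j ∧ (w' j : ℕ) ≤ (w' s : ℕ)
  have hsub : B ⊆ B' := by
    intro s hs
    simp only [B, B', mem_filter, mem_univ, true_and] at hs ⊢
    rcases lt_or_eq_of_le (Fin.le_def.2 hs.1) with hsj | rfl
    · exact hagree s hsj ▸ hs
    · omega
  have hj : j ∈ B' ∧ j ∉ B := by
    simp only [B, B', mem_filter, mem_univ, true_and]
    omega
  exact hD.not_gt (card_lt_card ((ssubset_iff_of_subset hsub).2 ⟨j, hj⟩))

theorem rankCount_lt_rankCount_of_gap {w' : Perm (Fin n)} (hagree : ∀ s < j, w' s = w s)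
    (hD : rankCount w' (w' j) l ≤ rankCount w (w' j) l) (hjl : (j : ℕ) ≤ l)
    (hi : (w' j : ℕ) < i) (hij : i ≤ (w j : ℕ))
    (hgap : ∀ s, j < s → (s : ℕ) ≤ l → ¬((w' j : ℕ) ≤ w s ∧ (w s : ℕ) < i)) :
    rankCount w' i l < rankCount w i l := by
  have h := rankCount_add_card_filter (u := w) (l := l) hi.le
  have h' := rankCount_add_card_filter (u := w') (l := l) hi.le
  set B := univ.filter fun s : Fin n => (s : ℕ) ≤ l ∧ (w' j : ℕ) ≤ (w s : ℕ) ∧ (w s : ℕ) < i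
  set B' := univ.filter fun s : Fin n => (s : ℕ) ≤ l ∧ (w' j : ℕ) ≤ (w' s : ℕ) ∧ (w' s : ℕ) < i
  have hsub : B ⊆ B' := by
    intro s hs
    simp only [B, B', mem_filter, mem_univ, true_and] at hs ⊢
    rcases lt_trichotomy s j with hsj | rfl | hjs
    · exact hagree s hsj ▸ hs
    · omega
    · exact absurd hs.2 (hgap s hjs hs.1)
  have hj : j ∈ B' ∧ j ∉ B := by
    simp only [B, B', mem_filter, mem_univ, true_and]
    omega
  have hlt : #B < #B' := card_lt_card ((ssubset_iff_of_subset hsub).2 ⟨j, hj⟩)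
  omega

theorem exists_swap_rankCount_le {w' : Perm (Fin n)}
    (hD : ∀ i l, rankCount w' i l ≤ rankCount w i l) (hne : w' ≠ w) :
    ∃ j m : Fin n, j < m ∧ w m < w j ∧ ∀ i l, rankCount w' i l ≤ rankCount (w * swap j m) i l := by
  have hdiff : (univ.filter fun s => w' s ≠ w s).Nonempty := by
    obtain ⟨s, hs⟩ := not_forall.1 (mt Equiv.ext hne)
    exact ⟨s, by simpa using hs⟩
  obtain ⟨j, hj, hjmin⟩ := (univ.filter fun s => w' s ≠ w s).exists_min_image id hdiff
  simp only [id] at hjmin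
  replace hj : w' j ≠ w j := (mem_filter.1 hj).2
  have hagree : ∀ s < j, w' s = w s := fun s hs =>
    by_contra fun h => (hjmin s (by simpa using h)).not_gt hs
  have hlt : w' j < w j := apply_lt_of_rankCount_le hagree (hD _ _) hj
  have hgap : (univ.filter fun s => j < s ∧ w' j ≤ w s ∧ w s < w j).Nonempty := by
    refine ⟨w⁻¹ (w' j), mem_filter.2 ⟨mem_univ _, ?_, by simp, by simpa using hlt⟩⟩
    rcases lt_trichotomy (w⁻¹ (w' j)) j with h | h | h
    · exact absurd (by simpa using hagree _ h) (w'.injective.ne h.ne)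
    · have := congrArg w h
      simp only [coe_inv, apply_symm_apply] at this
      exact absurd this hj
    · exact h
  obtain ⟨m, hm, hmmin⟩ :=
    (univ.filter fun s => j < s ∧ w' j ≤ w s ∧ w s < w j).exists_min_image id hgap
  simp only [id] at hmmin
  obtain ⟨hjm, hjm', hmj⟩ := (mem_filter.1 hm).2
  refine ⟨j, m, hjm, hmj, fun i l => ?_⟩
  have hswap := rankCount_le_rankCount_mul_swap_add (w := w) (i := i) (l := l) hjm
  split_ifs at hswap with hR
  · obtain ⟨hjl, hlm, hmi, hij⟩ := hR
    have hgap' : ∀ s, j < s → (s : ℕ) ≤ l → ¬((w' j : ℕ) ≤ w s ∧ (w s : ℕ) < i) := by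
      intro s hjs hsl h
      have hs : s ∈ univ.filter fun s => j < s ∧ w' j ≤ w s ∧ w s < w j :=
        mem_filter.2 ⟨mem_univ _, hjs, Fin.le_def.2 h.1, Fin.lt_def.2 (by omega)⟩
      exact (hmmin s hs).not_gt (Fin.lt_def.2 (by omega))
    have := rankCount_lt_rankCount_of_gap hagree (hD _ l) hjl
      (lt_of_le_of_lt (Fin.le_def.1 hjm') hmi) hij hgap'
    omega
  · exact (hD i l).trans hswap

end Equiv.Perm

open Equiv

theorem BruhatLE.refl {n : ℕ} (w : Perm (Fin n)) : BruhatLE w w :=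
  ⟨[], by simp, by simp, by simp⟩

theorem BruhatLE.of_mul_swap {n : ℕ} {w w' : Perm (Fin n)} {j m : Fin n} (hjm : j ≠ m)
    (hlen : len (w * swap j m) < len w) (h : BruhatLE w' (w * swap j m)) : BruhatLE w' w := by
  obtain ⟨L, hL, rfl, hdec⟩ := h
  refine ⟨swap j m :: L, ?_, by simp [mul_assoc], fun k hk => ?_⟩
  · simp only [List.mem_cons, forall_eq_or_imp]
    exact ⟨⟨j, m, hjm, rfl⟩, hL⟩
  · cases k with
    | zero => simpa using hlen
    | succ k => simpa [mul_assoc] using hdec k (by simpa using hk)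

theorem bruhatLE_of_rankCount_le {n : ℕ} {w w' : Perm (Fin n)}
    (hD : ∀ i l, w'.rankCount i l ≤ w.rankCount i l) : BruhatLE w' w := by
  induction hN : len w using Nat.strong_induction_on generalizing w with
  | _ N ih =>
    by_cases hne : w' = w
    · exact hne ▸ BruhatLE.refl w
    obtain ⟨j, m, hjm, hw, hD'⟩ := Perm.exists_swap_rankCount_le hD hne
    have hlen := Perm.len_mul_swap_lt hjm hw
    exact (ih _ (hN ▸ hlen) hD' rfl).of_mul_swap hjm.ne hlen

theorem rankCount_le_rankCount_of_mul_eq {K Γ₀ : Type*} [Field K]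
    [LinearOrderedCommGroupWithZero Γ₀] {v : Valuation K Γ₀} {n : ℕ} {w w' : Equiv.Perm (Fin n)}
    {r r' N D c : Matrix (Fin n) (Fin n) K} (hr : r ∈ v.Rw w) (hr' : r' ∈ v.Rw w')
    (hN : N.IsUpperTriangular) (hN1 : ∀ i, N i i = 1) (hNv : ∀ i j, v (N i j) ≤ 1)
    (hD : D.IsDiag) (hD0 : ∀ i, D i i ≠ 0) (hDv : Monotone fun i => v (D i i))
    (hc : c.IsUpperTriangular) (h : N * D * r' = r * c) (i l : ℕ) :
    w'.rankCount i l ≤ w.rankCount i l := by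
  set T := univ.filter fun s : Fin n => (s : ℕ) ≤ l ∧ i ≤ (w' s : ℕ)
  set S := univ.filter fun s : Fin n => (s : ℕ) ≤ l ∧ i ≤ (w s : ℕ)
  let f := (N * D * r').mulVecLin ∘ₗ Function.ExtendByZero.linearMap K ((↑) : T → Fin n)
  calc w'.rankCount i l = Fintype.card T := (Fintype.card_coe T).symm
    _ ≤ #(S.image w) := card_le_card_of_forall_exists_ne_zero f _ fun a ha => ?_
    _ ≤ w.rankCount i l := card_image_le
  set x : Fin n → K := Function.extend (↑) a 0
  have hxT : ∀ s, x s ≠ 0 → s ∈ T := fun s hs => by_contra fun hsT =>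
    hs (Function.extend_apply' _ _ _ fun ⟨t, ht⟩ => hsT (ht ▸ t.2))
  have hx0 : x ≠ 0 := by
    obtain ⟨t, ht⟩ := Function.ne_iff.1 ha
    exact Function.ne_iff.2 ⟨t, by simpa [x, Subtype.val_injective.extend_apply] using ht⟩
  have hxl : ∀ s : Fin n, l < s → x s = 0 := fun s hs => by_contra fun h => by
    have := (mem_filter.1 (hxT s h)).2.1
    omega
  obtain ⟨s, k, hs, hsk, hk⟩ :=
    Valuation.Rw.exists_isPivot_unitriangular_mul_diagonal_mul hr' hN hN1 hNv hD hD0 hDv hx0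
  have hfa : f a = r *ᵥ (c *ᵥ x) := by
    rw [mulVec_mulVec, ← h]
    rfl
  have hvec : N *ᵥ (D *ᵥ (r' *ᵥ x)) = r *ᵥ (c *ᵥ x) := by
    rw [mulVec_mulVec, mulVec_mulVec, h, ← mulVec_mulVec]
  rw [hvec] at hk
  obtain ⟨s₂, hs₂l, rfl⟩ :=
    Valuation.Rw.exists_eq_of_isPivot_mul_upperTriangular hr hc hxl hk
  have hsT := (mem_filter.1 (hxT s hs)).2
  refine ⟨w s₂, mem_image_of_mem w (mem_filter.2 ⟨mem_univ _, hs₂l, ?_⟩), ?_⟩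
  · exact hsT.2.trans (Fin.le_def.1 hsk)
  · exact hfa ▸ hk.1

section Padic

variable {p : ℕ} [Fact p.Prime] {F : Type} [Field F] [Algebra ℤ_[p] F]

theorem inv_natCast_notMem_oF [Algebra ℚ_[p] F] [IsScalarTower ℤ_[p] ℚ_[p] F] :
    (p : F)⁻¹ ∉ oF p F := by
  intro hmem
  have hint : IsIntegral ℤ_[p] (algebraMap ℚ_[p] F (p : ℚ_[p])⁻¹) := by
    rw [map_inv₀, map_natCast]
    exact hmem
  obtain ⟨y, hy⟩ := IsIntegrallyClosed.isIntegral_iff.1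
    (IsIntegral.tower_bot (algebraMap ℚ_[p] F).injective hint)
  have hnorm : ‖(p : ℚ_[p])⁻¹‖ ≤ 1 := hy ▸ y.norm_le_one
  rw [norm_inv, Padic.norm_p, inv_inv] at hnorm
  exact absurd hnorm (by exact_mod_cast (Fact.out : p.Prime).one_lt.not_ge)

theorem mem_oF_or_inv_mem_oF {π : F} (hπ : π ∈ oF p F)
    (hunif : ∀ x : F, x ≠ 0 → ∃ (m : ℤ) (u : F), u ∈ oF p F ∧ u⁻¹ ∈ oF p F ∧ x = u * π ^ m)
    (x : F) : x ∈ oF p F ∨ x⁻¹ ∈ oF p F := by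
  change x ∈ integralClosure ℤ_[p] F ∨ x⁻¹ ∈ integralClosure ℤ_[p] F
  rcases eq_or_ne x 0 with rfl | hx
  · exact Or.inl (zero_mem _)
  obtain ⟨m, u, hu, hui, rfl⟩ := hunif x hx
  change u ∈ integralClosure ℤ_[p] F at hu
  change u⁻¹ ∈ integralClosure ℤ_[p] F at hui
  change π ∈ integralClosure ℤ_[p] F at hπ
  obtain ⟨k, rfl | rfl⟩ := Int.eq_nat_or_neg m
  · exact Or.inl (by simpa using mul_mem hu (pow_mem hπ k))
  · exact Or.inr (by simpa [mul_inv, mul_comm] using mul_mem hui (pow_mem hπ k))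

noncomputable def oFValuationSubring (h : ∀ x : F, x ∈ oF p F ∨ x⁻¹ ∈ oF p F) :
    ValuationSubring F :=
  .ofSubring (integralClosure ℤ_[p] F).toSubring h

variable (h : ∀ x : F, x ∈ oF p F ∨ x⁻¹ ∈ oF p F)

theorem valuation_le_one_iff_mem_oF (x : F) :
    (oFValuationSubring h).valuation x ≤ 1 ↔ x ∈ oF p F :=
  ValuationSubring.valuation_le_one_iff _ x

theorem valuation_lt_one_of_uniformizer [Algebra ℚ_[p] F] [IsScalarTower ℤ_[p] ℚ_[p] F]
    {π : F} (hπ : π ∈ oF p F)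
    (hunif : ∀ x : F, x ≠ 0 → ∃ (m : ℤ) (u : F), u ∈ oF p F ∧ u⁻¹ ∈ oF p F ∧ x = u * π ^ m) :
    (oFValuationSubring h).valuation π < 1 := by
  refine lt_of_le_of_ne ((valuation_le_one_iff_mem_oF h π).2 hπ) fun hπ1 => ?_
  have hp0 : (p : F) ≠ 0 := fun hp => inv_natCast_notMem_oF (by
    rw [hp, _root_.inv_zero]
    exact zero_mem (integralClosure ℤ_[p] F))
  obtain ⟨m, u, -, hui, hp⟩ := hunif (p : F) hp0
  refine inv_natCast_notMem_oF ((valuation_le_one_iff_mem_oF h _).1 ?_)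
  rw [hp, mul_inv, map_mul, ← _root_.zpow_neg, map_zpow₀, hπ1, _root_.one_zpow, mul_one]
  exact (valuation_le_one_iff_mem_oF h _).2 hui

variable {n : ℕ}

theorem Rw_subset_valuation_Rw {π : F} (hπ : (oFValuationSubring h).valuation π < 1)
    (w : Equiv.Perm (Fin n)) : Rw p F π n w ⊆ (oFValuationSubring h).valuation.Rw w := by
  intro r hr i j
  obtain ⟨h1, h0, hO, hπO⟩ := hr i j
  refine ⟨h1, h0, fun hj hi => (valuation_le_one_iff_mem_oF h _).2 (hO hj hi), fun hj hi => ?_⟩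
  obtain ⟨c, hc, hrc⟩ := hπO hj hi
  rw [hrc, map_mul]
  exact mul_lt_one_of_lt_of_le hπ ((valuation_le_one_iff_mem_oF h c).2 hc)

theorem isN0_transvection {i j : Fin n} (hij : i < j) :
    IsN0 p F (Matrix.nonsingInvUnit (Matrix.transvection i j (1 : F))
      (by rw [Matrix.det_transvection_of_ne _ _ hij.ne]; exact isUnit_one)) := by
  refine ⟨fun k => ?_, fun k l hlk => ?_, fun k l => ?_⟩
  · change Matrix.transvection i j (1 : F) k k = 1
    simp only [Matrix.transvection, Matrix.add_apply, Matrix.one_apply_eq, Matrix.single_apply]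
    rw [if_neg fun h : i = k ∧ j = k => hij.ne (h.1.trans h.2.symm), add_zero]
  · change Matrix.transvection i j (1 : F) k l = 0
    simp only [Matrix.transvection, Matrix.add_apply, Matrix.one_apply_ne hlk.ne', zero_add,
      Matrix.single_apply]
    exact if_neg fun h => (h.1 ▸ h.2 ▸ hlk).not_gt hij
  · change Matrix.transvection i j (1 : F) k l ∈ integralClosure ℤ_[p] F
    simp only [Matrix.transvection, Matrix.add_apply, Matrix.one_apply, Matrix.single_apply]
    refine add_mem ?_ ?_ <;> split_ifs <;> simp

theorem IsN0.isUpperTriangular {m : GL (Fin n) F} (hm : IsN0 p F m) :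
    (m : Matrix (Fin n) (Fin n) F).IsUpperTriangular :=
  fun i j hij => hm.2.1 i j hij

theorem IsN0.valuation_le_one {m : GL (Fin n) F} (hm : IsN0 p F m) (i j : Fin n) :
    (oFValuationSubring h).valuation ((m : Matrix (Fin n) (Fin n) F) i j) ≤ 1 :=
  (valuation_le_one_iff_mem_oF h _).2 (hm.2.2 i j)

variable {t : GL (Fin n) F}

theorem Tplus.isDiag (ht : t ∈ Tplus p F n) : (t : Matrix (Fin n) (Fin n) F).IsDiag :=
  fun i j hij => ht.1 i j hij

theorem Tplus.mul_apply (ht : t ∈ Tplus p F n) (M : Matrix (Fin n) (Fin n) F) (i j : Fin n) :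
    ((t : Matrix (Fin n) (Fin n) F) * M) i j = (t : Matrix (Fin n) (Fin n) F) i i * M i j := by
  rw [Matrix.mul_apply]
  exact Finset.sum_eq_single i (fun k _ hk => by rw [ht.1 i k hk.symm, zero_mul]) (by simp)

theorem Tplus.diag_ne_zero (ht : t ∈ Tplus p F n) (i : Fin n) :
    (t : Matrix (Fin n) (Fin n) F) i i ≠ 0 := by
  have := congr_fun (congr_fun (Units.mul_inv t) i) i
  rw [Tplus.mul_apply ht, Matrix.one_apply_eq] at this
  exact left_ne_zero_of_mul_eq_one this

theorem Tplus.coe_inv (ht : t ∈ Tplus p F n) :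
    ((t⁻¹ : GL (Fin n) F) : Matrix (Fin n) (Fin n) F) =
      Matrix.diagonal fun i => ((t : Matrix (Fin n) (Fin n) F) i i)⁻¹ := by
  rw [Matrix.coe_units_inv]
  refine Matrix.inv_eq_left_inv (Matrix.ext fun a b => ?_)
  rw [Matrix.diagonal_mul, Matrix.one_apply]
  split_ifs with hab
  · exact hab ▸ inv_mul_cancel₀ (Tplus.diag_ne_zero ht a)
  · rw [ht.1 a b hab, mul_zero]

theorem Tplus.monotone_valuation (ht : t ∈ Tplus p F n) :
    Monotone fun i => (oFValuationSubring h).valuation ((t : Matrix (Fin n) (Fin n) F) i i) := by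
  intro i j hij
  rcases hij.eq_or_lt with rfl | hlt
  · exact le_rfl
  have hent : ((t : Matrix (Fin n) (Fin n) F) * Matrix.transvection i j (1 : F) *
      (t⁻¹ : GL (Fin n) F) : Matrix (Fin n) (Fin n) F) i j ∈ oF p F :=
    (ht.2 _ (isN0_transvection hlt)).2.2 i j
  rw [Tplus.coe_inv ht, Matrix.mul_diagonal, Tplus.mul_apply ht, Matrix.transvection,
    Matrix.add_apply, Matrix.one_apply_ne hlt.ne, Matrix.single_apply_same, zero_add, mul_one,
    ← valuation_le_one_iff_mem_oF h, map_mul, map_inv₀,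
    mul_inv_le_iff₀ (zero_lt_iff.2 ((Valuation.ne_zero_iff _).2 (Tplus.diag_ne_zero ht j))),
    one_mul] at hent
  exact hent

end Padic

section Borel

variable {K : Type} [Field K] {n : ℕ} {b : Matrix (Fin n) (Fin n) K}

theorem IsBorel.isUpperTriangular (hb : IsBorel K b) : b.IsUpperTriangular :=
  fun i j hij => hb.1 i j hij

theorem IsBorel.isUnit_det (hb : IsBorel K b) : IsUnit b.det := by
  rw [Matrix.det_of_isUpperTriangular hb.isUpperTriangular]
  exact isUnit_iff_ne_zero.2 (Finset.prod_ne_zero_iff.2 fun i _ => hb.2 i)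

theorem IsBorel.isUpperTriangular_inv (hb : IsBorel K b) : b⁻¹.IsUpperTriangular :=
  have := b.invertibleOfIsUnitDet hb.isUnit_det
  Matrix.blockTriangular_inv_of_blockTriangular hb.isUpperTriangular

end Borel

theorem mul_mul_eq_mul_inv_of_inv_mul_inv_mul_eq {K : Type*} [Field K] {n : ℕ}
    {g h : GL (Fin n) K} {x y b : Matrix (Fin n) (Fin n) K} (hb : IsUnit b.det)
    (hx : (↑g⁻¹ : Matrix (Fin n) (Fin n) K) * (↑h⁻¹ : Matrix (Fin n) (Fin n) K) * y = x * b) :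
    (h : Matrix (Fin n) (Fin n) K) * g * x = y * b⁻¹ := by
  have hy : y = (h : Matrix (Fin n) (Fin n) K) * g * (x * b) := by
    rw [← hx]
    simp only [Matrix.mul_assoc, Units.mul_inv_cancel_left]
  rw [hy, ← Matrix.mul_assoc _ x b, Matrix.mul_nonsing_inv_cancel_right _ _ hb]

/-- if `y ∈ U_w = R_w B`, `n t ∈ B₊ = N₀ T₊`, and
`x = t⁻¹ n⁻¹ y ∈ U_{w'} = R_{w'} B`, then `w' ⪯ w` in the strong Bruhat order. -/
theorem stmt12 (n : ℕ) (π : F) (hπ : π ∈ oF p F)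
    (hunif : ∀ x : F, x ≠ 0 →
      ∃ (m : ℤ) (u : F), u ∈ oF p F ∧ u⁻¹ ∈ oF p F ∧ x = u * π ^ m)
    (w w' : Equiv.Perm (Fin n)) (y : Matrix (Fin n) (Fin n) F)
    (nn t : GL (Fin n) F) (hnn : IsN0 p F nn) (ht : t ∈ Tplus p F n)
    (hy : y ∈ RwB p F π n w)
    (hx : (↑t⁻¹ : Matrix (Fin n) (Fin n) F) * (↑nn⁻¹ : Matrix (Fin n) (Fin n) F) * y
            ∈ RwB p F π n w') :
    BruhatLE w' w := by
  obtain ⟨r, b, hr, hb, rfl⟩ := hy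
  obtain ⟨r', b', hr', hb', hx⟩ := hx
  have hO := mem_oF_or_inv_mem_oF hπ hunif
  have hπv := valuation_lt_one_of_uniformizer hO hπ hunif
  refine bruhatLE_of_rankCount_le (rankCount_le_rankCount_of_mul_eq
    (Rw_subset_valuation_Rw hO hπv w hr) (Rw_subset_valuation_Rw hO hπv w' hr')
    hnn.isUpperTriangular hnn.1 (hnn.valuation_le_one hO) (Tplus.isDiag ht)
    (Tplus.diag_ne_zero ht) (Tplus.monotone_valuation hO ht)
    (hb.isUpperTriangular.mul hb'.isUpperTriangular_inv) ?_)
  rw [← Matrix.mul_assoc]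
  exact mul_mul_eq_mul_inv_of_inv_mul_inv_mul_eq hb'.isUnit_det hx
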